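/- Let V be a finite set, T ≥ 1, and for each t let p_t^u, p_t^r be strictly positive probability mass functions on V with max over t and x of max{p_t^u(x)/p_t^r(x), p_t^r(x)/p_t^u(x)} ≤ M for some M > 1. Let p_t^d = α·p_t^r + (1−α)·p_t^u with α ∈ (0,1). Then (1/T)·Σ_{t=1}^T D_KL(p_t^u ‖ p_t^r) ≤ (log M)·(M/(M−1))·(√2/(1−α))·√((1/T)·Σ_{t=1}^T JS(p_t^d, p_t^r)). -/

import Mathlib

/-!
Round by round, `x log x` lies below its chord on `[1, M]`, so `KL(pᵘ‖pʳ)` is at most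
`(M log M / (M - 1)) · TV(pᵘ, pʳ)`. The mixture `pᵈ` is exactly `1 - α` times as far from `pʳ`
in total variation as `pᵘ`. The pointwise inequality `u² ≤ (1 + u) log (1 + u) + (1 - u) log (1 - u)`
gives `(a - b)² / (2(a + b)) ≤ a log (2a / (a + b)) + b log (2b / (a + b))`, which together with
Cauchy–Schwarz yields `TV² ≤ 2 JS`. Concavity of `√` handles the average over rounds.
-/

open Finset

/-- Kullback–Leibler divergence (natural log). -/
noncomputable def KL {V : Type*} [Fintype V] (p q : V → ℝ) : ℝ :=
  ∑ x, p x * Real.log (p x / q x)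

/-- Jensen–Shannon divergence. -/
noncomputable def JS {V : Type*} [Fintype V] (p q : V → ℝ) : ℝ :=
  (1 / 2) * KL p (fun x => (p x + q x) / 2) + (1 / 2) * KL q (fun x => (p x + q x) / 2)

open Real

lemma sq_le_one_add_mul_log_add_one_sub_mul_log {u : ℝ} (hu : |u| < 1) :
    u ^ 2 ≤ (1 + u) * log (1 + u) + (1 - u) * log (1 - u) := by
  wlog h₀ : 0 ≤ u generalizing u
  · have := this (u := -u) (by rwa [abs_neg]) (by linarith)
    simp only [neg_sq, ← sub_eq_add_neg, sub_neg_eq_add] at this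
    linarith
  have h : u < 1 := (le_abs_self u).trans_lt hu
  let F (y : ℝ) : ℝ := (1 + y) * log (1 + y) + (1 - y) * log (1 - y) - y ^ 2
  have hF : ∀ y ∈ Set.Icc 0 u, HasDerivAt F (log ((1 + y) / (1 - y)) - 2 * y) y := by
    rintro y ⟨hy₀, hyu⟩
    have hplus := (hasDerivAt_mul_log (by linarith : 1 + y ≠ 0)).comp y
      ((hasDerivAt_id y).const_add 1)
    have hminus := (hasDerivAt_mul_log (by linarith : 1 - y ≠ 0)).comp y
      ((hasDerivAt_id y).const_sub 1)
    refine ((hplus.add hminus).sub (hasDerivAt_pow 2 y)).congr_deriv ?_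
    rw [log_div (by linarith) (by linarith)]
    simp only [mul_one, mul_neg, Nat.cast_ofNat]
    ring
  suffices hmono : MonotoneOn F (Set.Icc 0 u) by
    simpa [F] using hmono ⟨le_rfl, h₀⟩ ⟨h₀, le_rfl⟩ h₀
  refine monotoneOn_of_hasDerivWithinAt_nonneg (convex_Icc 0 u)
    (fun y hy ↦ (hF y hy).continuousAt.continuousWithinAt)
    (fun y hy ↦ (hF y (interior_subset hy)).hasDerivWithinAt) fun y hy ↦ ?_
  rw [interior_Icc] at hy
  -- the first term of the series `log ((1 + y) / (1 - y)) = 2 ∑ y ^ (2k+1) / (2k+1)`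
  have hseries := sum_range_le_log_div hy.1.le (hy.2.trans h) 1
  simp only [range_one, sum_singleton, mul_zero, zero_add, pow_one, CharP.cast_eq_zero, div_one,
    one_div] at hseries
  linarith

lemma sq_sub_div_le_mul_log_add_mul_log {a b : ℝ} (ha : 0 < a) (hb : 0 < b) :
    (a - b) ^ 2 / (2 * (a + b)) ≤
      a * log (a / ((a + b) / 2)) + b * log (b / ((a + b) / 2)) := by
  have hs : 0 < a + b := by linarith
  set u := (a - b) / (a + b) with hu_def
  have hu : |u| < 1 := by
    rw [abs_div, abs_of_pos hs, div_lt_one hs, abs_lt]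
    constructor <;> linarith
  have hplus : 1 + u = a / ((a + b) / 2) := by rw [hu_def]; field_simp; ring
  have hminus : 1 - u = b / ((a + b) / 2) := by rw [hu_def]; field_simp; ring
  have hscaled := mul_le_mul_of_nonneg_left (sq_le_one_add_mul_log_add_one_sub_mul_log hu)
    (by positivity : 0 ≤ (a + b) / 2)
  rw [hplus, hminus] at hscaled
  calc (a - b) ^ 2 / (2 * (a + b)) = (a + b) / 2 * u ^ 2 := by
        rw [hu_def]; field_simp
    _ ≤ _ := hscaled
    _ = _ := by field_simp

lemma mul_log_le_sub_one_mul {M t : ℝ} (hM : 1 < M) (ht : 1 ≤ t) (htM : t ≤ M) :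
    t * log t ≤ (t - 1) * (M * log M / (M - 1)) := by
  rcases ht.eq_or_lt with rfl | ht
  · simp
  have hslope := convexOn_mul_log.secant_mono (a := 1) (Set.mem_Ici.2 zero_le_one)
    (Set.mem_Ici.2 (by linarith)) (Set.mem_Ici.2 (by linarith)) ht.ne' hM.ne' htM
  simp only [log_one, mul_zero, sub_zero] at hslope
  rw [div_le_iff₀ (by linarith)] at hslope
  linarith

lemma mean_sqrt_le_sqrt_mean {ι : Type*} [Fintype ι] {f : ι → ℝ} (hf : ∀ i, 0 ≤ f i) :
    1 / (Fintype.card ι : ℝ) * ∑ i, √(f i) ≤ √(1 / Fintype.card ι * ∑ i, f i) := by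
  have cs := sum_sqrt_mul_sqrt_le univ (fun _ ↦ zero_le_one) hf
  simp only [sqrt_one, one_mul, sum_const, card_univ, nsmul_eq_mul, mul_one] at cs
  calc 1 / (Fintype.card ι : ℝ) * ∑ i, √(f i)
      ≤ 1 / Fintype.card ι * (√(Fintype.card ι) * √(∑ i, f i)) := by gcongr
    _ = √(Fintype.card ι) / Fintype.card ι * √(∑ i, f i) := by ring
    _ = √(1 / Fintype.card ι * ∑ i, f i) := by
      rw [sqrt_div_self', sqrt_mul (by positivity), sqrt_div' _ (Nat.cast_nonneg _), sqrt_one]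

noncomputable def TV {V : Type*} [Fintype V] (p q : V → ℝ) : ℝ :=
  (∑ x, |p x - q x|) / 2

lemma mix_pos {V : Type*} {p q : V → ℝ} {α : ℝ} (hα0 : 0 ≤ α) (hα1 : α < 1)
    (hp : ∀ x, 0 < p x) (hq : ∀ x, 0 ≤ q x) (x : V) : 0 < α * q x + (1 - α) * p x := by
  have := hp x; have := hq x; have : 0 < 1 - α := by linarith
  positivity

section Divergences

variable {V : Type*} [Fintype V] {p q : V → ℝ}

lemma sum_max_sub_zero_eq_TV (hpq : ∑ x, p x = ∑ x, q x) :
    ∑ x, max (p x - q x) 0 = TV p q := by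
  have hmax : ∀ x, max (p x - q x) 0 = (|p x - q x| + (p x - q x)) / 2 := fun x ↦ by
    rcases le_total 0 (p x - q x) with h | h
    · rw [max_eq_left h, abs_of_nonneg h]; ring
    · rw [max_eq_right h, abs_of_nonpos h]; ring
  simp only [hmax, TV, ← sum_div, sum_add_distrib, sum_sub_distrib, hpq, sub_self, add_zero]

lemma KL_le_mul_TV {M : ℝ} (hM : 1 < M) (hp : ∀ x, 0 ≤ p x) (hq : ∀ x, 0 < q x)
    (hpq : ∀ x, p x ≤ M * q x) (hsum : ∑ x, p x = ∑ x, q x) :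
    KL p q ≤ log M * (M / (M - 1)) * TV p q := by
  have hpoint : ∀ x, p x * log (p x / q x) ≤ M * log M / (M - 1) * max (p x - q x) 0 := by
    intro x
    have hqx := (hq x).ne'
    rcases le_or_gt (q x) (p x) with hle | hlt
    · have hchord := mul_log_le_sub_one_mul hM ((one_le_div (hq x)).2 hle)
        ((div_le_iff₀ (hq x)).2 (hpq x))
      rw [max_eq_left (sub_nonneg.2 hle)]
      calc p x * log (p x / q x) = q x * (p x / q x * log (p x / q x)) := by
            field_simp
        _ ≤ q x * ((p x / q x - 1) * (M * log M / (M - 1))) := by gcongr; exact (hq x).le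
        _ = M * log M / (M - 1) * (p x - q x) := by field_simp
    · rw [max_eq_right (by linarith), mul_zero]
      exact mul_nonpos_of_nonneg_of_nonpos (hp x)
        (log_nonpos (div_nonneg (hp x) (hq x).le) ((div_le_one (hq x)).2 hlt.le))
  calc KL p q ≤ ∑ x, M * log M / (M - 1) * max (p x - q x) 0 :=
        sum_le_sum fun x _ ↦ hpoint x
    _ = log M * (M / (M - 1)) * TV p q := by
        rw [← mul_sum, sum_max_sub_zero_eq_TV hsum]; ring

lemma TV_sq_le_two_mul_JS (hp : ∀ x, 0 < p x) (hq : ∀ x, 0 < q x)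
    (hp1 : ∑ x, p x = 1) (hq1 : ∑ x, q x = 1) :
    TV p q ^ 2 ≤ 2 * JS p q := by
  have hs : ∀ x, 0 < p x + q x := fun x ↦ add_pos (hp x) (hq x)
  have titu := sq_sum_div_le_sum_sq_div univ (fun x ↦ |p x - q x|) fun x _ ↦ hs x
  rw [sum_add_distrib, hp1, hq1] at titu
  have htriangular : ∑ x, |p x - q x| ^ 2 / (p x + q x) ≤ 4 * JS p q :=
    calc ∑ x, |p x - q x| ^ 2 / (p x + q x)
        = 2 * ∑ x, (p x - q x) ^ 2 / (2 * (p x + q x)) := by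
          rw [mul_sum]
          refine sum_congr rfl fun x _ ↦ ?_
          rw [sq_abs]
          field_simp
      _ ≤ 2 * ∑ x, (p x * log (p x / ((p x + q x) / 2)) +
            q x * log (q x / ((p x + q x) / 2))) := by
          gcongr with x
          exact sq_sub_div_le_mul_log_add_mul_log (hp x) (hq x)
      _ = 4 * JS p q := by simp only [JS, KL, sum_add_distrib]; ring
  rw [TV]
  linarith

lemma JS_nonneg (hp : ∀ x, 0 < p x) (hq : ∀ x, 0 < q x)
    (hp1 : ∑ x, p x = 1) (hq1 : ∑ x, q x = 1) : 0 ≤ JS p q := by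
  linarith [TV_sq_le_two_mul_JS hp hq hp1 hq1, sq_nonneg (TV p q)]

lemma TV_mix_eq {α : ℝ} (hα : α ≤ 1) :
    TV (fun x ↦ α * q x + (1 - α) * p x) q = (1 - α) * TV p q := by
  have habs : ∀ x, |α * q x + (1 - α) * p x - q x| = (1 - α) * |p x - q x| := fun x ↦ by
    rw [show α * q x + (1 - α) * p x - q x = (1 - α) * (p x - q x) by ring, abs_mul,
      abs_of_nonneg (by linarith)]
  simp only [TV, habs, ← mul_sum]
  ring

lemma sum_mix_eq_one {α : ℝ} (hp1 : ∑ x, p x = 1) (hq1 : ∑ x, q x = 1) :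
    ∑ x, (α * q x + (1 - α) * p x) = 1 := by
  simp only [sum_add_distrib, ← mul_sum, hp1, hq1]; ring

lemma KL_le_mul_sqrt_JS_mix {M α : ℝ} (hM : 1 < M) (hα0 : 0 ≤ α) (hα1 : α < 1)
    (hp : ∀ x, 0 < p x) (hq : ∀ x, 0 < q x) (hp1 : ∑ x, p x = 1) (hq1 : ∑ x, q x = 1)
    (hpq : ∀ x, p x ≤ M * q x) :
    KL p q ≤ log M * (M / (M - 1)) * (√2 / (1 - α)) *
      √(JS (fun x ↦ α * q x + (1 - α) * p x) q) := by
  have hlogM := log_nonneg hM.le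
  have hM1 : 0 < M - 1 := by linarith
  have h1α : 0 < 1 - α := by linarith
  set pd := fun x ↦ α * q x + (1 - α) * p x
  calc KL p q ≤ log M * (M / (M - 1)) * TV p q :=
        KL_le_mul_TV hM (fun x ↦ (hp x).le) hq hpq (by rw [hp1, hq1])
    _ = log M * (M / (M - 1)) * (TV pd q / (1 - α)) := by
        rw [TV_mix_eq hα1.le]; field_simp
    _ ≤ log M * (M / (M - 1)) * (√(2 * JS pd q) / (1 - α)) := by
        gcongr
        exact le_sqrt_of_sq_le <| TV_sq_le_two_mul_JS
          (mix_pos hα0 hα1 hp fun x ↦ (hq x).le) hq (sum_mix_eq_one hp1 hq1) hq1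
    _ = log M * (M / (M - 1)) * (√2 / (1 - α)) * √(JS pd q) := by
        rw [sqrt_mul zero_le_two]; ring

end Divergences

theorem avg_KL_le_MarI_general {V : Type*} [Fintype V] (T : ℕ)
    (pu pr : Fin T → V → ℝ) (α : ℝ) (hα : α ∈ Set.Ioo (0 : ℝ) 1)
    (M : ℝ) (hM : 1 < M)
    (hpu0 : ∀ t x, 0 < pu t x) (hpr0 : ∀ t x, 0 < pr t x)
    (hpu1 : ∀ t, ∑ x, pu t x = 1) (hpr1 : ∀ t, ∑ x, pr t x = 1)
    (hratio : ∀ t x, max (pu t x / pr t x) (pr t x / pu t x) ≤ M) :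
    (1 / (T : ℝ)) * ∑ t, KL (pu t) (pr t) ≤
      Real.log M * (M / (M - 1)) * (Real.sqrt 2 / (1 - α)) *
        Real.sqrt ((1 / (T : ℝ)) *
          ∑ t, JS (fun x => α * pr t x + (1 - α) * pu t x) (pr t)) := by
  obtain ⟨hα0, hα1⟩ := hα
  have hM1 : 0 < M - 1 := by linarith
  have h1α : 0 < 1 - α := by linarith
  have hlogM := log_nonneg hM.le
  have hpq : ∀ t x, pu t x ≤ M * pr t x := fun t x ↦
    (div_le_iff₀ (hpr0 t x)).1 ((le_max_left _ _).trans (hratio t x))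
  set pd : Fin T → V → ℝ := fun t x ↦ α * pr t x + (1 - α) * pu t x
  set K := log M * (M / (M - 1)) * (√2 / (1 - α))
  have hJS : ∀ t, 0 ≤ JS (pd t) (pr t) := fun t ↦
    JS_nonneg (mix_pos hα0.le hα1 (hpu0 t) fun x ↦ (hpr0 t x).le) (hpr0 t)
      (sum_mix_eq_one (hpu1 t) (hpr1 t)) (hpr1 t)
  calc (1 / (T : ℝ)) * ∑ t, KL (pu t) (pr t) ≤ 1 / T * ∑ t, K * √(JS (pd t) (pr t)) := by
        gcongr with t
        exact KL_le_mul_sqrt_JS_mix hM hα0.le hα1 (hpu0 t) (hpr0 t) (hpu1 t) (hpr1 t) (hpq t)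
    _ = K * (1 / T * ∑ t, √(JS (pd t) (pr t))) := by rw [← mul_sum]; ring
    _ ≤ K * √(1 / T * ∑ t, JS (pd t) (pr t)) := by
        gcongr
        simpa using mean_sqrt_le_sqrt_mean hJS

/-- The averaged KL divergence is controlled by the marginal information:
`(1/T)·Σ_t D_KL(p_t^u‖p_t^r) ≤ (log M)·(M/(M−1))·(√2/(1−α))·√((1/T)·Σ_t JS(p_t^d, p_t^r))`. -/
theorem avg_KL_le_MarI {V : Type*} [Fintype V] (T : ℕ) (hT : 1 ≤ T)
    (pu pr : Fin T → V → ℝ) (α : ℝ) (hα : α ∈ Set.Ioo (0 : ℝ) 1)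
    (M : ℝ) (hM : 1 < M)
    (hpu0 : ∀ t x, 0 < pu t x) (hpr0 : ∀ t x, 0 < pr t x)
    (hpu1 : ∀ t, ∑ x, pu t x = 1) (hpr1 : ∀ t, ∑ x, pr t x = 1)
    (hratio : ∀ t x, max (pu t x / pr t x) (pr t x / pu t x) ≤ M) :
    (1 / (T : ℝ)) * ∑ t, KL (pu t) (pr t) ≤
      Real.log M * (M / (M - 1)) * (Real.sqrt 2 / (1 - α)) *
        Real.sqrt ((1 / (T : ℝ)) *
          ∑ t, JS (fun x => α * pr t x + (1 - α) * pu t x) (pr t)) :=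
  avg_KL_le_MarI_general T pu pr α hα M hM hpu0 hpr0 hpu1 hpr1 hratio
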